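/- arXiv:1811.08778 — 9 statements merged into one kernel-verified Lean document; each statement's English description precedes it below -/
import Mathlib

section
/- Let A ∈ ℝ^{M×N} and let s, r, K be positive integers with 1 ≤ r ≤ min(s, K) and s ≤ N. If the map Z ↦ AZ is injective on Σ_{s,r} ⊆ ℝ^{N×K}, then spark(A) > s. -/
/-!
If `spark A ≤ s`, some `s` columns of `A` are dependent, so there is `x ≠ 0` with `A x = 0`
supported on at most `s` rows. Choose `r` rows `V` containing a row `i₀` with `x i₀ ≠ 0`, and
let `E` carry an `r × r` identity block in the rows `V`. With `w = e_k / x i₀`, where `k` is the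
block column of `i₀`, the matrices `E` and `E + x wᵀ` are supported on at most `s` rows and their
`V`-blocks have determinants `1` and `1 + w ⬝ x = 2` (matrix determinant lemma), so both lie in
`Σ_{s,r}`. They are distinct, yet `A` maps them to the same matrix.
-/

open Matrix

noncomputable section

/-- The set of indices of nonzero rows of a matrix. -/
def rowSupport {N K : ℕ} (X : Matrix (Fin N) (Fin K) ℝ) : Set (Fin N) := {i | X i ≠ 0}

/-- `X` is `s`-row sparse: at most `s` of its rows are nonzero. -/
def RowSparse {N K : ℕ} (s : ℕ) (X : Matrix (Fin N) (Fin K) ℝ) : Prop :=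
  (rowSupport X).ncard ≤ s

/-- `‖X‖₀`: the number of nonzero rows of `X`. -/
def rowL0 {N K : ℕ} (X : Matrix (Fin N) (Fin K) ℝ) : ℕ := (rowSupport X).ncard

/-- `Σ_{s,r}`: matrices in `ℝ^{N×K}` that are `s`-row sparse and have rank at least `r`. -/
def SigmaSR {N K : ℕ} (s r : ℕ) : Set (Matrix (Fin N) (Fin K) ℝ) :=
  {X | RowSparse s X ∧ r ≤ X.rank}

/-- The spark of `A`: the smallest `j` such that some `j` columns of `A` are
linearly dependent (`⊤` if the columns are linearly independent). -/
def spark {M N : ℕ} (A : Matrix (Fin M) (Fin N) ℝ) : ℕ∞ :=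
  sInf {j : ℕ∞ | ∃ S : Finset (Fin N), (S.card : ℕ∞) = j ∧
    ¬ LinearIndependent ℝ (fun i : S => Aᵀ (i : Fin N))}

open Function

section PartialIdentity

variable {m n ι R : Type*} [Fintype ι] [DecidableEq m] [DecidableEq n] [Semiring R]

lemma Matrix.submatrix_sum_single_one [DecidableEq ι] {f : ι → m} {g : ι → n} (hf : Injective f)
    (hg : Injective g) : (∑ t, single (f t) (g t) (1 : R)).submatrix f g = 1 := by
  ext a b
  simp only [submatrix_apply, Matrix.sum_apply, single_apply, hf.eq_iff, hg.eq_iff, one_apply]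
  rw [Finset.sum_eq_single a (fun t _ h => if_neg fun h' => h h'.1) (by simp)]
  simp

lemma Matrix.sum_single_apply_eq_zero {f : ι → m} {g : ι → n} {i : m} (hi : i ∉ Set.range f) :
    (∑ t, single (f t) (g t) (1 : R)) i = 0 := by
  ext k
  simp only [Matrix.sum_apply, single_apply]
  exact Finset.sum_eq_zero fun t _ => if_neg fun h => hi ⟨t, h.1⟩

end PartialIdentity

lemma Matrix.det_one_add_vecMulVec {m R : Type*} [Fintype m] [DecidableEq m] [CommRing R]
    (u v : m → R) : det (1 + vecMulVec u v) = 1 + v ⬝ᵥ u := by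
  rw [vecMulVec_eq Unit, det_one_add_replicateCol_mul_replicateRow]

lemma Matrix.card_le_rank_of_isUnit_submatrix {m n ι R : Type*} [Fintype n] [Fintype ι]
    [DecidableEq ι] [CommSemiring R] [StrongRankCondition R] {A : Matrix m n R} {f : ι → m}
    {g : ι → n} (h : IsUnit (A.submatrix f g)) : Fintype.card ι ≤ A.rank := by
  simpa [rank_of_isUnit _ h] using rank_submatrix_le A f g

section RowSupport

variable {N K : ℕ}

lemma rowSupport_add_subset (X Y : Matrix (Fin N) (Fin K) ℝ) :
    rowSupport (X + Y) ⊆ rowSupport X ∪ rowSupport Y := by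
  intro i hi
  by_contra h
  simp only [rowSupport, Set.mem_union, Set.mem_ofPred_eq, not_or, not_not] at h
  exact hi (by rw [show (X + Y) i = X i + Y i from rfl, h.1, h.2, add_zero])

lemma rowSupport_vecMulVec_subset (x : Fin N → ℝ) (w : Fin K → ℝ) :
    rowSupport (vecMulVec x w) ⊆ support x := by
  intro i hi hxi
  exact hi (by ext k; simp [vecMulVec_apply, hxi])

lemma rowSparse_of_rowSupport_subset {s : ℕ} {X : Matrix (Fin N) (Fin K) ℝ} {T : Finset (Fin N)}
    (hX : rowSupport X ⊆ T) (hT : T.card ≤ s) : RowSparse s X :=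
  (Set.ncard_le_ncard hX T.finite_toSet).trans (by rwa [Set.ncard_coe_finset])

end RowSupport

lemma exists_mulVec_eq_zero_of_spark_le {M N : ℕ} {A : Matrix (Fin M) (Fin N) ℝ} {s : ℕ}
    (h : spark A ≤ s) : ∃ S : Finset (Fin N), S.card ≤ s ∧
      ∃ x : Fin N → ℝ, x ≠ 0 ∧ A *ᵥ x = 0 ∧ support x ⊆ S := by
  obtain ⟨j, ⟨S, rfl, hS⟩, hjs⟩ :=
    sInf_lt_iff.1 (h.trans_lt (ENat.natCast_lt_natCast.2 s.lt_succ_self))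
  obtain ⟨l, hlS, hl, hl0⟩ := linearDepOn_iff'.1 hS
  refine ⟨S, Nat.lt_succ_iff.1 (by exact_mod_cast hjs), l, by simpa using hl0, ?_, ?_⟩
  · change Finsupp.linearCombination ℝ (fun j => Aᵀ j) l = 0 at hl
    rw [Finsupp.linearCombination_apply, Finsupp.sum_fintype _ _ (by simp)] at hl
    ext i
    simpa [mulVec, dotProduct, mul_comm] using congrFun hl i
  · intro i hi
    exact hlS (by simpa using hi)

lemma exists_mem_sigmaSR_add_vecMulVec_mem {N K s r : ℕ} (hr1 : 1 ≤ r) (hrs : r ≤ s)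
    (hrK : r ≤ K) (hsN : s ≤ N) {S : Finset (Fin N)} (hS : S.card ≤ s) {x : Fin N → ℝ}
    (hx : x ≠ 0) (hxS : support x ⊆ S) :
    ∃ Z ∈ SigmaSR (K := K) s r, ∃ w : Fin K → ℝ,
      vecMulVec x w ≠ 0 ∧ Z + vecMulVec x w ∈ SigmaSR s r := by
  obtain ⟨i₀, hi₀⟩ : ∃ i, x i ≠ 0 := Function.ne_iff.1 hx
  obtain ⟨T, hST, hT⟩ := S.exists_superset_card_eq hS (by simpa using hsN)
  obtain ⟨V, hi₀V, hVT, hV⟩ := Finset.exists_subsuperset_card_eq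
    (Finset.singleton_subset_iff.2 (hST (hxS hi₀))) (by simpa using hr1) (hT ▸ hrs)
  replace hV : Fintype.card V = r := by simpa using hV
  obtain ⟨g⟩ : Nonempty (V ↪ Fin K) :=
    Function.Embedding.nonempty_of_card_le (by simpa [hV] using hrK)
  let v₀ : V := ⟨i₀, Finset.singleton_subset_iff.1 hi₀V⟩
  let E : Matrix (Fin N) (Fin K) ℝ := ∑ t : V, single (t : Fin N) (g t) 1
  let w : Fin K → ℝ := Pi.single (g v₀) (x i₀)⁻¹
  have hE_rows : rowSupport E ⊆ T := fun i hi => by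
    by_contra hiT
    exact hi (Matrix.sum_single_apply_eq_zero (by simpa using fun h => hiT (hVT h)))
  have hX_rows : rowSupport (vecMulVec x w) ⊆ T :=
    (rowSupport_vecMulVec_subset x w).trans (hxS.trans (Finset.coe_subset.2 hST))
  have hE_minor : E.submatrix ((↑) : V → Fin N) g = 1 :=
    Matrix.submatrix_sum_single_one Subtype.val_injective g.injective
  have hw : w ∘ g = Pi.single v₀ (x i₀)⁻¹ :=
    funext fun t => by simp [w, Pi.single_apply, g.injective.eq_iff]
  have hEX_minor : ((E + vecMulVec x w).submatrix ((↑) : V → Fin N) g).det = 2 := by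
    change (E.submatrix _ g + vecMulVec (x ∘ ((↑) : V → Fin N)) (w ∘ g)).det = 2
    rw [hE_minor, det_one_add_vecMulVec, hw, single_dotProduct, Function.comp_apply,
      inv_mul_cancel₀ hi₀]
    norm_num
  have hX : vecMulVec x w ≠ 0 := fun h => by
    simpa [w, vecMulVec_apply, hi₀] using congrFun (congrFun h i₀) (g v₀)
  refine ⟨E, ⟨rowSparse_of_rowSupport_subset hE_rows hT.le, ?_⟩, w, hX,
    rowSparse_of_rowSupport_subset ((rowSupport_add_subset _ _).trans
      (Set.union_subset hE_rows hX_rows)) hT.le, ?_⟩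
  · exact hV ▸ Matrix.card_le_rank_of_isUnit_submatrix (hE_minor ▸ isUnit_one)
  · refine hV ▸ Matrix.card_le_rank_of_isUnit_submatrix (f := (↑)) (g := g) ?_
    rw [isUnit_iff_isUnit_det, hEX_minor]
    exact isUnit_iff_ne_zero.2 two_ne_zero

/-- If the map `Z ↦ A * Z` is injective on `Σ_{s,r} ⊆ ℝ^{N×K}`, then `spark A > s`. -/
theorem statement_0 {M N K : ℕ} (A : Matrix (Fin M) (Fin N) ℝ) (s r : ℕ)
    (hr1 : 1 ≤ r) (hrs : r ≤ s) (hrK : r ≤ K) (hsN : s ≤ N)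
    (hinj : Set.InjOn (fun Z : Matrix (Fin N) (Fin K) ℝ => A * Z)
      (SigmaSR (N := N) (K := K) s r)) :
    (s : ℕ∞) < spark A := by
  by_contra! hspark
  obtain ⟨S, hS, x, hx, hAx, hxS⟩ := exists_mulVec_eq_zero_of_spark_le hspark
  obtain ⟨Z, hZ, w, hX, hZw⟩ := exists_mem_sigmaSR_add_vecMulVec_mem hr1 hrs hrK hsN hS hx hxS
  have hAZ : A * (Z + vecMulVec x w) = A * Z := by
    rw [Matrix.mul_add, mul_vecMulVec, hAx, zero_vecMulVec, add_zero]
  exact hX (by simpa using hinj hZw hZ hAZ)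
end
end

section
/- Let A ∈ ℝ^{M×N} with spark(A) > s. Then for every s-row sparse matrix X ∈ ℝ^{N×K}, rank(AX) = rank(X). -/
open Matrix

noncomputable section

/-- If `spark A > s`, then for every `s`-row sparse `X`, `rank (A * X) = rank X`. -/
theorem statement_1 {M N K : ℕ} (A : Matrix (Fin M) (Fin N) ℝ) (s : ℕ)
    (hspark : (s : ℕ∞) < spark A)
    (X : Matrix (Fin N) (Fin K) ℝ) (hX : RowSparse s X) :
    (A * X).rank = X.rank := by
  -- Every set of at most `s` columns of `A` is linearly independent.
  have hLI : ∀ S : Finset (Fin N), S.card ≤ s →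
      LinearIndependent ℝ (fun i : S => Aᵀ (i : Fin N)) := by
    intro S hS
    by_contra h
    have hmem : (S.card : ℕ∞) ∈ {j : ℕ∞ | ∃ S : Finset (Fin N), (S.card : ℕ∞) = j ∧
        ¬ LinearIndependent ℝ (fun i : S => Aᵀ (i : Fin N))} := ⟨S, rfl, h⟩
    have h1 : spark A ≤ (S.card : ℕ∞) := sInf_le hmem
    have h2 : (S.card : ℕ∞) ≤ (s : ℕ∞) := by exact_mod_cast hS
    exact absurd (lt_of_lt_of_le hspark (h1.trans h2)) (lt_irrefl _)
  -- the support finset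
  have hfin : (rowSupport X).Finite := Set.toFinite _
  set T : Finset (Fin N) := hfin.toFinset with hTdef
  have hTcard : T.card ≤ s := by
    calc T.card = (rowSupport X).ncard := by
          rw [Set.ncard_eq_toFinset_card _ hfin]
      _ ≤ s := hX
  have hTLI := hLI T hTcard
  -- vectors in the range of X.mulVecLin vanish off T
  have hsupp : ∀ w ∈ LinearMap.range X.mulVecLin, ∀ i, i ∉ T → w i = 0 := by
    rintro w ⟨v, rfl⟩ i hi
    have hXi : X i = 0 := by
      by_contra h
      exact hi (by simp [hTdef, Set.Finite.mem_toFinset, rowSupport, h])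
    simp only [Matrix.mulVecLin_apply, Matrix.mulVec, dotProduct]
    refine Finset.sum_eq_zero fun j _ => ?_
    have : X i j = 0 := by rw [hXi]; rfl
    simp [this]
  -- A is injective on the range of X.mulVecLin
  have hinj0 : ∀ w ∈ LinearMap.range X.mulVecLin, A *ᵥ w = 0 → w = 0 := by
    intro w hw hAw
    have hsum : ∑ i : T, w i • Aᵀ (i : Fin N) = 0 := by
      rw [Finset.sum_coe_sort T (fun i => w i • Aᵀ i)]
      have : ∑ i ∈ T, w i • Aᵀ i = ∑ i : Fin N, w i • Aᵀ i := by
        refine Finset.sum_subset (Finset.subset_univ T) fun i _ hi => ?_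
        rw [hsupp w hw i hi, zero_smul]
      rw [this]
      funext j
      have := congrFun hAw j
      simpa [Matrix.mulVec, dotProduct, mul_comm] using this
    have hzero := Fintype.linearIndependent_iff.mp hTLI (fun i => w i) hsum
    funext i
    by_cases hi : i ∈ T
    · exact hzero ⟨i, hi⟩
    · exact hsupp w hw i hi
  -- conclude rank equality
  refine le_antisymm (Matrix.rank_mul_le_right A X) ?_
  have hrangeAX : LinearMap.range (A * X).mulVecLin
      = Submodule.map A.mulVecLin (LinearMap.range X.mulVecLin) := by
    rw [Matrix.mulVecLin_mul, LinearMap.range_comp]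
  set f : LinearMap.range X.mulVecLin →ₗ[ℝ] (Fin M → ℝ) :=
    A.mulVecLin.comp (LinearMap.range X.mulVecLin).subtype with hfdef
  have hfinj : Function.Injective f := by
    rw [← LinearMap.ker_eq_bot, eq_bot_iff]
    rintro ⟨w, hw⟩ hker
    have : A *ᵥ w = 0 := hker
    have hw0 : w = 0 := hinj0 w hw this
    exact (Submodule.mem_bot ℝ).mpr (Subtype.ext hw0)
  have hrangef : LinearMap.range f
      = Submodule.map A.mulVecLin (LinearMap.range X.mulVecLin) := by
    rw [hfdef, LinearMap.range_comp, Submodule.range_subtype]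
  have h1 : X.rank = Module.finrank ℝ (LinearMap.range f) := by
    rw [LinearMap.finrank_range_of_inj hfinj]
    rfl
  rw [h1, Matrix.rank, hrangeAX, ← hrangef]
end
end

section
/- Let A ∈ ℝ^{M×N} and let s, r, K be positive integers with 1 ≤ r ≤ min(s, K) and s ≤ N. If the map Z ↦ AZ is injective on Σ_{s,r} ⊆ ℝ^{N×K}, then for every X ∈ Σ_{s,r}, X is the unique minimizer of ‖Z‖₀ over all Z ∈ ℝ^{N×K} satisfying AZ = AX; that is, for every Z ∈ ℝ^{N×K} with AZ = AX and Z ≠ X, one has ‖Z‖₀ > ‖X‖₀. -/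
open Matrix

noncomputable section

/-- If a square submatrix has nonzero determinant, the rank is at least its size. -/
lemma aux_rank_of_submatrix {N K n : ℕ} (W : Matrix (Fin N) (Fin K) ℝ)
    (ρ : Fin n → Fin N) (γ : Fin n → Fin K) (h : (W.submatrix ρ γ).det ≠ 0) :
    n ≤ W.rank := by
  have hPQ : W.submatrix ρ γ =
      ((1 : Matrix (Fin N) (Fin N) ℝ).submatrix ρ id) * W *
        ((1 : Matrix (Fin K) (Fin K) ℝ).submatrix id γ) := by
    ext a b
    simp [Matrix.mul_apply, Matrix.one_apply, Finset.sum_ite_eq, Finset.sum_ite_eq',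
      ite_mul, mul_ite]
  have hunit : IsUnit (W.submatrix ρ γ) :=
    (Matrix.isUnit_iff_isUnit_det _).mpr (isUnit_iff_ne_zero.mpr h)
  have hr : (W.submatrix ρ γ).rank = n := by
    rw [Matrix.rank_of_isUnit _ hunit, Fintype.card_fin]
  calc n = (W.submatrix ρ γ).rank := hr.symm
    _ ≤ _ := by
        rw [hPQ]
        exact le_trans (Matrix.rank_mul_le_left _ _) (Matrix.rank_mul_le_right _ _)

/-- If the kernel of `P` is contained in that of `Q`, then `rank Q ≤ rank P`. -/
lemma aux_rank_le_of_ker {N K : ℕ} (P Q : Matrix (Fin N) (Fin K) ℝ)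
    (h : ∀ x, P.mulVec x = 0 → Q.mulVec x = 0) : Q.rank ≤ P.rank := by
  have hker : LinearMap.ker P.mulVecLin ≤ LinearMap.ker Q.mulVecLin := by
    intro x hx
    rw [LinearMap.mem_ker, Matrix.mulVecLin_apply] at hx ⊢
    exact h x hx
  have h1 := LinearMap.finrank_range_add_finrank_ker P.mulVecLin
  have h2 := LinearMap.finrank_range_add_finrank_ker Q.mulVecLin
  have h3 := Submodule.finrank_mono hker
  have hP : P.rank = Module.finrank ℝ (LinearMap.range P.mulVecLin) := rfl
  have hQ : Q.rank = Module.finrank ℝ (LinearMap.range Q.mulVecLin) := rfl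
  omega

/-- If `Z ↦ A * Z` is injective on `Σ_{s,r}`, then every `X ∈ Σ_{s,r}` is the unique
minimizer of `‖Z‖₀` subject to `A * Z = A * X`. -/
theorem statement_3 {M N K : ℕ} (A : Matrix (Fin M) (Fin N) ℝ) (s r : ℕ)
    (hr1 : 1 ≤ r) (hrs : r ≤ s) (hrK : r ≤ K) (hsN : s ≤ N)
    (hinj : Set.InjOn (fun Z : Matrix (Fin N) (Fin K) ℝ => A * Z)
      (SigmaSR (N := N) (K := K) s r)) :
    ∀ X ∈ SigmaSR (N := N) (K := K) s r, ∀ Z : Matrix (Fin N) (Fin K) ℝ,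
      A * Z = A * X → Z ≠ X → rowL0 X < rowL0 Z := by
  classical
  intro X hX Z hAZ hZX
  obtain ⟨hXs, hXr⟩ := hX
  by_contra hlt
  push_neg at hlt
  have hZs : RowSparse s Z := le_trans hlt hXs
  by_cases hZr : r ≤ Z.rank
  · exact hZX (hinj ⟨hZs, hZr⟩ ⟨hXs, hXr⟩ hAZ)
  push_neg at hZr
  -- find b with Z *ᵥ b = 0 but X *ᵥ b ≠ 0
  have hnk : ¬ ∀ x, Z.mulVec x = 0 → X.mulVec x = 0 := by
    intro h
    have := aux_rank_le_of_ker Z X h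
    omega
  push_neg at hnk
  obtain ⟨b, hbZ, hbX⟩ := hnk
  set v := X.mulVec b with hvdef
  have hAv : A.mulVec v = 0 := by
    rw [hvdef, Matrix.mulVec_mulVec, ← hAZ, ← Matrix.mulVec_mulVec, hbZ, Matrix.mulVec_zero]
  -- support of v
  set S : Finset (Fin N) := Finset.univ.filter (fun i => v i ≠ 0) with hSdef
  have hmemS : ∀ i, i ∈ S ↔ v i ≠ 0 := by
    intro i; simp [hSdef]
  have hSX : (↑S : Set (Fin N)) ⊆ rowSupport X := by
    intro i hi
    rw [Finset.mem_coe, hmemS] at hi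
    intro hXi
    apply hi
    rw [hvdef]
    show X i ⬝ᵥ b = 0
    rw [show X i = 0 from hXi]
    simp
  have hScard : S.card ≤ s := by
    calc S.card = (↑S : Set (Fin N)).ncard := (Set.ncard_coe_finset S).symm
      _ ≤ (rowSupport X).ncard := Set.ncard_le_ncard hSX (Set.toFinite _)
      _ ≤ s := hXs
  obtain ⟨i₀, hi₀v⟩ : ∃ i, v i ≠ 0 := by
    by_contra h
    push_neg at h
    exact hbX (funext h)
  have hi₀S : i₀ ∈ S := (hmemS i₀).mpr hi₀v
  -- pick superset T and subset P
  set m := r - 1 with hmdef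
  have hm : m + 1 = r := Nat.succ_pred_eq_of_pos hr1
  obtain ⟨T, hST, hTcard⟩ := Finset.exists_superset_card_eq (s := S) (n := max S.card r)
    (le_max_left _ _) (by rw [Fintype.card_fin]; exact le_trans (max_le hScard hrs) hsN)
  have hi₀T : i₀ ∈ T := hST hi₀S
  have hTec : m ≤ (T.erase i₀).card := by
    rw [Finset.card_erase_of_mem hi₀T, hTcard]
    have := le_max_right S.card r
    omega
  obtain ⟨P, hPsub, hPcard⟩ := Finset.exists_subset_card_eq hTec
  have hi₀P : i₀ ∉ P := fun h => (Finset.mem_erase.mp (hPsub h)).1 rfl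
  have hPT : P ⊆ T := hPsub.trans (Finset.erase_subset _ _)
  -- enumeration of P
  have hPcard' : Fintype.card {x // x ∈ P} = m := by rw [Fintype.card_coe]; exact hPcard
  set e : {x // x ∈ P} ≃ Fin m := Fintype.equivFinOfCardEq hPcard' with hedef
  have hK0 : 0 < K := lt_of_lt_of_le hr1 hrK
  set e0 : Fin K := ⟨0, hK0⟩ with he0def
  have hcollt : ∀ p : {x // x ∈ P}, (e p : ℕ) + 1 < K := by
    intro p
    have := (e p).isLt
    omega
  set col : {x // x ∈ P} → Fin K := fun p => ⟨(e p : ℕ) + 1, hcollt p⟩ with hcoldef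
  have hcolinj : Function.Injective col := by
    intro p q h
    apply e.injective
    have h' : (e p : ℕ) + 1 = (e q : ℕ) + 1 := congrArg Fin.val h
    exact Fin.ext (by omega)
  have hcol0 : ∀ p, col p ≠ e0 := by
    intro p h
    have h' := congrArg Fin.val h
    simp [hcoldef, he0def] at h'
  -- the two matrices
  set W₂ : Matrix (Fin N) (Fin K) ℝ :=
    Matrix.of (fun i j => if h : i ∈ P then (if j = col ⟨i, h⟩ then (1:ℝ) else 0) else 0)
    with hW₂def
  set Wc : ℝ → Matrix (Fin N) (Fin K) ℝ :=
    fun c => Matrix.of (fun i j => (if j = e0 then c * v i else 0) + W₂ i j) with hWcdef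
  -- membership in Sigma
  have hmem : ∀ c : ℝ, c ≠ 0 → Wc c ∈ SigmaSR (N := N) (K := K) s r := by
    intro c hc
    constructor
    · -- row sparsity
      have hsub : rowSupport (Wc c) ⊆ ↑(S ∪ P) := by
        intro i hi
        by_contra hiT
        rw [Finset.coe_union, Set.mem_union] at hiT
        push_neg at hiT
        obtain ⟨hiS, hiP⟩ := hiT
        rw [Finset.mem_coe, hmemS] at hiS
        push_neg at hiS
        rw [Finset.mem_coe] at hiP
        apply hi
        funext j
        show (if j = e0 then c * v i else 0) + W₂ i j = 0
        rw [hW₂def]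
        simp [hiS, hiP, Matrix.of_apply]
      calc (rowSupport (Wc c)).ncard
          ≤ (↑(S ∪ P) : Set (Fin N)).ncard := Set.ncard_le_ncard hsub (Set.toFinite _)
        _ = (S ∪ P).card := Set.ncard_coe_finset _
        _ ≤ T.card := Finset.card_le_card (Finset.union_subset hST hPT)
        _ ≤ s := by rw [hTcard]; exact max_le hScard hrs
    · -- rank at least r
      set ρ : Fin (m + 1) → Fin N :=
        Fin.cases i₀ (fun a : Fin m => ((e.symm a : {x // x ∈ P}) : Fin N)) with hρdef
      set γ : Fin (m + 1) → Fin K :=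
        Fin.cases e0 (fun a : Fin m => col (e.symm a)) with hγdef
      set B : Matrix (Fin (m+1)) (Fin (m+1)) ℝ := (Wc c).submatrix ρ γ with hBdef
      have hWval : ∀ i j, Wc c i j = (if j = e0 then c * v i else 0) + W₂ i j := by
        intro i j; rfl
      have hW₂val : ∀ i j, W₂ i j =
          if h : i ∈ P then (if j = col ⟨i, h⟩ then (1:ℝ) else 0) else 0 := by
        intro i j; rfl
      have htri : ∀ a b : Fin (m+1), a < b → B a b = 0 := by
        intro a b hab
        rcases Fin.eq_zero_or_eq_succ b with rfl | ⟨b', rfl⟩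
        · exact absurd hab (Fin.not_lt_zero a).elim
        rcases Fin.eq_zero_or_eq_succ a with rfl | ⟨a', rfl⟩
        · show Wc c (ρ 0) (γ b'.succ) = 0
          have h1 : ρ 0 = i₀ := by rw [hρdef]; simp
          have h2 : γ b'.succ = col (e.symm b') := by rw [hγdef]; simp
          rw [h1, h2, hWval, hW₂val]
          simp [hcol0, hi₀P]
        · have hab' : a' ≠ b' := by
            intro h; rw [h] at hab; exact lt_irrefl _ hab
          show Wc c (ρ a'.succ) (γ b'.succ) = 0
          have h1 : ρ a'.succ = ((e.symm a' : {x // x ∈ P}) : Fin N) := by rw [hρdef]; simp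
          have h2 : γ b'.succ = col (e.symm b') := by rw [hγdef]; simp
          rw [h1, h2, hWval, hW₂val]
          have hmem' : ((e.symm a' : {x // x ∈ P}) : Fin N) ∈ P := (e.symm a').2
          rw [dif_pos hmem']
          have hne : col (e.symm b') ≠ col ⟨((e.symm a' : {x // x ∈ P}) : Fin N), hmem'⟩ := by
            rw [Subtype.coe_eta]
            intro h
            exact hab' (by
              have := hcolinj h
              have := congrArg e this
              simp at this
              exact this.symm)
          simp [hcol0, hne]
      have hdiag0 : B 0 0 = c * v i₀ := by
        show Wc c (ρ 0) (γ 0) = c * v i₀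
        have h1 : ρ 0 = i₀ := by rw [hρdef]; simp
        have h2 : γ 0 = e0 := by rw [hγdef]; simp
        rw [h1, h2, hWval, hW₂val]
        simp [hi₀P]
      have hdiags : ∀ a : Fin m, B a.succ a.succ = 1 := by
        intro a
        show Wc c (ρ a.succ) (γ a.succ) = 1
        have h1 : ρ a.succ = ((e.symm a : {x // x ∈ P}) : Fin N) := by rw [hρdef]; simp
        have h2 : γ a.succ = col (e.symm a) := by rw [hγdef]; simp
        rw [h1, h2, hWval, hW₂val]
        have hmem' : ((e.symm a : {x // x ∈ P}) : Fin N) ∈ P := (e.symm a).2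
        rw [dif_pos hmem']
        rw [Subtype.coe_eta]
        simp [hcol0]
      have hdet : B.det = ∏ i, B i i := by
        apply Matrix.det_of_lowerTriangular
        intro i j hij
        exact htri i j hij
      have hdetne : B.det ≠ 0 := by
        rw [hdet, Fin.prod_univ_succ, hdiag0]
        have : ∀ a : Fin m, B a.succ a.succ = 1 := hdiags
        rw [Finset.prod_congr rfl (fun a _ => this a)]
        simp [mul_ne_zero hc hi₀v]
      have := aux_rank_of_submatrix (Wc c) ρ γ hdetne
      omega
  -- A * Wc c does not depend on c
  have hAW : ∀ c : ℝ, A * (Wc c) = A * W₂ := by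
    intro c
    ext i j
    show (∑ k, A i k * ((if j = e0 then c * v k else 0) + W₂ k j)) = ∑ k, A i k * W₂ k j
    have : ∀ k, A i k * ((if j = e0 then c * v k else 0) + W₂ k j)
        = A i k * (if j = e0 then c * v k else 0) + A i k * W₂ k j := fun k => mul_add _ _ _
    rw [Finset.sum_congr rfl (fun k _ => this k), Finset.sum_add_distrib]
    have hz : (∑ k, A i k * (if j = e0 then c * v k else 0)) = 0 := by
      by_cases hj : j = e0
      · simp only [hj, if_pos rfl]
        have hAvi : ∑ k, A i k * v k = 0 := by
          have := congrFun hAv i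
          simpa [Matrix.mulVec, dotProduct] using this
        calc (∑ k, A i k * (c * v k)) = c * ∑ k, A i k * v k := by
              rw [Finset.mul_sum]
              exact Finset.sum_congr rfl (fun k _ => by ring)
          _ = 0 := by rw [hAvi, mul_zero]
      · simp [hj]
    rw [hz, zero_add]
  -- contradiction via injectivity
  have heq := hinj (hmem 1 one_ne_zero) (hmem 2 two_ne_zero)
    (by show A * Wc 1 = A * Wc 2; rw [hAW, hAW])
  have hval : Wc 1 i₀ e0 = Wc 2 i₀ e0 := by rw [heq]
  rw [hWcdef] at hval
  simp only [Matrix.of_apply, if_pos rfl] at hval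
  have hW₂i₀ : W₂ i₀ e0 = 0 := by
    show (if h : i₀ ∈ P then (if e0 = col ⟨i₀, h⟩ then (1:ℝ) else 0) else 0) = 0
    rw [dif_neg hi₀P]
  rw [hW₂i₀] at hval
  simp at hval
  exact hi₀v (by linarith)
end
end

section
/- Let A ∈ ℝ^{M×N}, let s, r, K be positive integers with 1 ≤ r ≤ min(s, K) and s ≤ N, and suppose the map Z ↦ AZ is injective on Σ_{s,r} ⊆ ℝ^{N×K}. Let X ∈ ℝ^{N×K} be s-row sparse, Y = AX with rank(Y) = r, and suppose Y = VU where V ∈ ℝ^{M×r} has rank(V) = r and U ∈ ℝ^{r×K} satisfies UUᵀ = I_r. Then W := XUᵀ is s-row sparse, has rank r (full column rank), satisfies AW = V, and is the unique minimizer of ‖Z‖₀ over all Z ∈ ℝ^{N×r} satisfying AZ = V. -/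
open Matrix

noncomputable section

lemma rowL0_mul_le {N K L : ℕ} (X : Matrix (Fin N) (Fin K) ℝ)
    (B : Matrix (Fin K) (Fin L) ℝ) : rowL0 (X * B) ≤ rowL0 X := by
  apply Set.ncard_le_ncard _ (Set.toFinite _)
  intro i hi
  simp only [rowSupport, Set.mem_setOf_eq] at hi ⊢
  intro h0
  apply hi
  funext j
  simp [Matrix.mul_apply, show ∀ k, X i k = 0 from fun k => congrFun h0 k]

/-- Reduction to the full-rank setting: `W = X * Uᵀ` is `s`-row sparse, has full column
rank `r`, satisfies `A * W = V`, and is the unique `‖·‖₀` minimizer subject to `A * Z = V`. -/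
theorem statement_5 {M N K : ℕ} (A : Matrix (Fin M) (Fin N) ℝ) (s r : ℕ)
    (hr1 : 1 ≤ r) (hrs : r ≤ s) (hrK : r ≤ K) (hsN : s ≤ N)
    (hinj : Set.InjOn (fun Z : Matrix (Fin N) (Fin K) ℝ => A * Z)
      (SigmaSR (N := N) (K := K) s r))
    (X : Matrix (Fin N) (Fin K) ℝ) (hX : RowSparse s X)
    (Y : Matrix (Fin M) (Fin K) ℝ) (hY : Y = A * X) (hrankY : Y.rank = r)
    (V : Matrix (Fin M) (Fin r) ℝ) (hV : V.rank = r)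
    (U : Matrix (Fin r) (Fin K) ℝ) (hU : U * Uᵀ = 1) (hVU : Y = V * U) :
    RowSparse s (X * Uᵀ) ∧ (X * Uᵀ).rank = r ∧ A * (X * Uᵀ) = V ∧
      ∀ Z : Matrix (Fin N) (Fin r) ℝ, A * Z = V → Z ≠ X * Uᵀ →
        rowL0 (X * Uᵀ) < rowL0 Z := by

  have hAW : A * (X * Uᵀ) = V := by
    rw [← Matrix.mul_assoc, ← hY, hVU, Matrix.mul_assoc, hU, Matrix.mul_one]
  have hrle : r ≤ (X * Uᵀ).rank := by
    have := Matrix.rank_mul_le_right A (X * Uᵀ)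
    rw [hAW, hV] at this; exact this
  have hWsparse : RowSparse s (X * Uᵀ) :=
    le_trans (rowL0_mul_le X Uᵀ) hX
  refine ⟨hWsparse, le_antisymm ?_ hrle, hAW, ?_⟩
  · simpa using Matrix.rank_le_card_width (X * Uᵀ)
  · intro Z hZ hne
    by_contra hlt
    push_neg at hlt
    have hXrank : r ≤ X.rank := by
      have := Matrix.rank_mul_le_right A X
      rw [← hY, hrankY] at this; exact this
    have hZUrank : r ≤ (Z * U).rank := by
      have h1 : A * (Z * U) = Y := by rw [← Matrix.mul_assoc, hZ, hVU]
      have := Matrix.rank_mul_le_right A (Z * U)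
      rw [h1, hrankY] at this; exact this
    have hZUsparse : RowSparse s (Z * U) :=
      le_trans (rowL0_mul_le Z U) (le_trans hlt (le_trans (rowL0_mul_le X Uᵀ) hX))
    have heq : A * (Z * U) = A * X := by
      rw [← Matrix.mul_assoc, hZ, ← hVU, hY]
    have hZU : Z * U = X := hinj ⟨hZUsparse, hZUrank⟩ ⟨hX, hXrank⟩ heq
    apply hne
    calc Z = Z * (U * Uᵀ) := by rw [hU, Matrix.mul_one]
    _ = (Z * U) * Uᵀ := by rw [Matrix.mul_assoc]
    _ = X * Uᵀ := by rw [hZU]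
end
end

section
/- Let A ∈ ℝ^{M×N}, let s, r, K be positive integers with 1 ≤ r ≤ min(s, K) and s ≤ N, and suppose the map Z ↦ AZ is injective on Σ_{s,r} ⊆ ℝ^{N×K}. Let X ∈ ℝ^{N×K} be s-row sparse, Y = AX with rank(Y) = r, and suppose Y = VU where V ∈ ℝ^{M×r} has rank(V) = r and U ∈ ℝ^{r×K} satisfies UUᵀ = I_r. Then X = (XUᵀ)U; i.e., the original matrix X is recovered as X = WU where W = XUᵀ. -/
open Matrix

noncomputable section

/-- Recovery of the original matrix: `X = (X * Uᵀ) * U`. -/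
theorem statement_6 {M N K : ℕ} (A : Matrix (Fin M) (Fin N) ℝ) (s r : ℕ)
    (hr1 : 1 ≤ r) (hrs : r ≤ s) (hrK : r ≤ K) (hsN : s ≤ N)
    (hinj : Set.InjOn (fun Z : Matrix (Fin N) (Fin K) ℝ => A * Z)
      (SigmaSR (N := N) (K := K) s r))
    (X : Matrix (Fin N) (Fin K) ℝ) (hX : RowSparse s X)
    (Y : Matrix (Fin M) (Fin K) ℝ) (hY : Y = A * X) (hrankY : Y.rank = r)
    (V : Matrix (Fin M) (Fin r) ℝ) (hV : V.rank = r)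
    (U : Matrix (Fin r) (Fin K) ℝ) (hU : U * Uᵀ = 1) (hVU : Y = V * U) :
    X = (X * Uᵀ) * U := by
  set X' : Matrix (Fin N) (Fin K) ℝ := X * Uᵀ * U with hX'
  have hAX' : A * X' = A * X := by
    have : A * X' = Y * Uᵀ * U := by
      rw [hX', hY]; rw [← Matrix.mul_assoc, ← Matrix.mul_assoc]
    rw [this, hVU, Matrix.mul_assoc V U Uᵀ, hU, Matrix.mul_one, ← hVU, hY]
  -- X ∈ SigmaSR
  have hXrank : r ≤ X.rank := by
    have := Matrix.rank_mul_le_right A X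
    rw [← hY, hrankY] at this
    exact this
  have hXmem : X ∈ SigmaSR (N := N) (K := K) s r := ⟨hX, hXrank⟩
  -- X' sparse
  have hsub : rowSupport X' ⊆ rowSupport X := by
    intro i hi
    simp only [rowSupport, Set.mem_setOf_eq] at hi ⊢
    intro hXi
    apply hi
    funext j
    simp only [hX', Matrix.mul_apply]
    have : ∀ k, X i k = 0 := fun k => congrFun hXi k
    simp [this]
  have hX'sparse : RowSparse s X' :=
    le_trans (Set.ncard_le_ncard hsub (Set.toFinite _)) hX
  have hX'rank : r ≤ X'.rank := by
    have := Matrix.rank_mul_le_right A X'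
    rw [hAX', ← hY, hrankY] at this
    exact this
  have hX'mem : X' ∈ SigmaSR (N := N) (K := K) s r := ⟨hX'sparse, hX'rank⟩
  exact hinj hXmem hX'mem hAX'.symm
end
end

section
/- Let A ∈ ℝ^{M×N} satisfy the null space property (NSP) of order s. Then every s-row sparse matrix X ∈ ℝ^{N×K} is the unique minimizer of ‖Z‖_{2,1} over all Z ∈ ℝ^{N×K} satisfying AZ = AX; that is, for every Z ∈ ℝ^{N×K} with AZ = AX and Z ≠ X, one has ‖Z‖_{2,1} > ‖X‖_{2,1}. -/
/-!
Write `V = Z - X`, whose columns lie in `ker A`. The only real step is to lift the scalar null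
space property to rows: `∑_{i ∈ I} ‖V i‖ < ∑_{i ∉ I} ‖V i‖` for `V ≠ 0` and `|I| ≤ s`. For a
standard Gaussian vector `g`, `E |⟪v, g⟫| = c ‖v‖` with `c = E |N(0,1)| > 0`, so averaging the
scalar property over the vectors `V g ∈ ker A` gives the row version; it is strict because
equality would force `V g = 0` almost surely. The usual triangle-inequality argument on the
row support of `X` then concludes.
-/

open Matrix

noncomputable section

/-- The `ℓ_{2,1}` norm of a matrix: the sum of the Euclidean norms of its rows. -/
def l21norm {N K : ℕ} (X : Matrix (Fin N) (Fin K) ℝ) : ℝ :=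
  ∑ i, Real.sqrt (∑ j, (X i j) ^ 2)

/-- `A` satisfies the null space property of order `s`: for every nonzero `x ∈ ker A`
and every index set `I` with `|I| ≤ s`, `‖x_I‖₁ < ‖x_{Iᶜ}‖₁`. -/
def NSP {M N : ℕ} (A : Matrix (Fin M) (Fin N) ℝ) (s : ℕ) : Prop :=
  ∀ x : Fin N → ℝ, A.mulVec x = 0 → x ≠ 0 →
    ∀ I : Finset (Fin N), I.card ≤ s → ∑ i ∈ I, |x i| < ∑ i ∈ Iᶜ, |x i|

open MeasureTheory ProbabilityTheory
open scoped RealInnerProductSpace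

lemma integral_abs_gaussianReal_pos : 0 < ∫ x, |x| ∂gaussianReal 0 1 := by
  have := nullSingletonClass_gaussianReal (μ := 0) one_ne_zero
  have hint : Integrable (fun x : ℝ => |x|) (gaussianReal 0 1) :=
    ((memLp_id_gaussianReal 1).integrable le_rfl).abs
  refine (integral_pos_iff_support_of_nonneg (fun x => abs_nonneg x) hint).2 ?_
  have hsupp : Function.support (fun x : ℝ => |x|) = {0}ᶜ := by ext; simp
  rw [hsupp, prob_compl_eq_one_sub (measurableSet_singleton 0), measure_singleton]
  simp

section StdGaussian

variable {E : Type*} [NormedAddCommGroup E] [InnerProductSpace ℝ E] [FiniteDimensional ℝ E]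
  [MeasurableSpace E] [BorelSpace E]

lemma integrable_abs_inner_stdGaussian (v : E) :
    Integrable (fun g => |⟪v, g⟫|) (stdGaussian E) :=
  (IsGaussian.integrable_dual _ (innerSL ℝ v)).abs

lemma map_inner_stdGaussian (v : E) :
    (stdGaussian E).map (fun g => ⟪v, g⟫) = gaussianReal 0 (‖v‖ ^ 2).toNNReal := by
  have h := IsGaussian.map_eq_gaussianReal (μ := stdGaussian E) (innerSL ℝ v)
  rwa [integral_strongDual_stdGaussian, variance_dual_stdGaussian, innerSL_apply_norm] at h

lemma integral_abs_inner_stdGaussian (v : E) :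
    ∫ g, |⟪v, g⟫| ∂stdGaussian E = ‖v‖ * ∫ x, |x| ∂gaussianReal 0 1 := by
  have hscale : gaussianReal 0 (‖v‖ ^ 2).toNNReal = (gaussianReal 0 1).map (‖v‖ * ·) := by
    rw [gaussianReal_map_const_mul]; congr 1 <;> simp [← NNReal.coe_inj]
  calc ∫ g, |⟪v, g⟫| ∂stdGaussian E
      = ∫ x, |x| ∂(stdGaussian E).map (fun g => ⟪v, g⟫) :=
        (integral_map (by fun_prop) (by fun_prop)).symm
    _ = ∫ y, |‖v‖ * y| ∂gaussianReal 0 1 := by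
        rw [map_inner_stdGaussian, hscale, integral_map (by fun_prop) (by fun_prop)]
    _ = ‖v‖ * ∫ x, |x| ∂gaussianReal 0 1 := by
        simp only [abs_mul, abs_norm, integral_const_mul]

end StdGaussian

lemma inner_toLp_row_eq_mulVec {m ι : Type*} [Fintype ι] (V : Matrix m ι ℝ) (i : m)
    (g : EuclideanSpace ℝ ι) : ⟪WithLp.toLp 2 (V i), g⟫ = (V *ᵥ WithLp.ofLp g) i := by
  simp [PiLp.inner_apply, mulVec, dotProduct, mul_comm]

lemma l21norm_eq_sum_norm_row {N K : ℕ} (X : Matrix (Fin N) (Fin K) ℝ) :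
    l21norm X = ∑ i, ‖WithLp.toLp 2 (X i)‖ := by
  simp [l21norm, EuclideanSpace.norm_eq]

section MulVecStdGaussian

variable {m ι : Type*} [Fintype ι] (V : Matrix m ι ℝ)

lemma integrable_abs_mulVec_stdGaussian (i : m) :
    Integrable (fun g => |(V *ᵥ WithLp.ofLp g) i|) (stdGaussian (EuclideanSpace ℝ ι)) := by
  simpa only [inner_toLp_row_eq_mulVec] using
    integrable_abs_inner_stdGaussian (WithLp.toLp 2 (V i))

lemma integral_abs_mulVec_stdGaussian (i : m) :
    ∫ g, |(V *ᵥ WithLp.ofLp g) i| ∂stdGaussian (EuclideanSpace ℝ ι) =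
      ‖WithLp.toLp 2 (V i)‖ * ∫ x, |x| ∂gaussianReal 0 1 := by
  simpa only [inner_toLp_row_eq_mulVec] using
    integral_abs_inner_stdGaussian (WithLp.toLp 2 (V i))

lemma eq_zero_of_ae_mulVec_stdGaussian_eq_zero
    (hV : ∀ᵐ g ∂stdGaussian (EuclideanSpace ℝ ι), V *ᵥ WithLp.ofLp g = 0) : V = 0 := by
  funext i
  show V i = 0
  have hrow : ‖WithLp.toLp 2 (V i)‖ * ∫ x, |x| ∂gaussianReal 0 1 = 0 := by
    rw [← integral_abs_mulVec_stdGaussian,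
      integral_eq_zero_of_ae (hV.mono fun g hg => by simp [hg])]
  simpa using (mul_eq_zero.1 hrow).resolve_right integral_abs_gaussianReal_pos.ne'

end MulVecStdGaussian

theorem NSP.sum_norm_row_lt {M N : ℕ} {ι : Type*} [Fintype ι] {A : Matrix (Fin M) (Fin N) ℝ}
    {s : ℕ} (hA : NSP A s) {V : Matrix (Fin N) ι ℝ} (hAV : A * V = 0) (hV : V ≠ 0)
    {I : Finset (Fin N)} (hI : I.card ≤ s) :
    ∑ i ∈ I, ‖WithLp.toLp 2 (V i)‖ < ∑ i ∈ Iᶜ, ‖WithLp.toLp 2 (V i)‖ := by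
  set μ := stdGaussian (EuclideanSpace ℝ ι)
  set x : EuclideanSpace ℝ ι → Fin N → ℝ := fun g => V *ᵥ WithLp.ofLp g
  have hker : ∀ g, A *ᵥ x g = 0 := fun g => by simp only [x, mulVec_mulVec, hAV, zero_mulVec]
  have hint : ∀ J : Finset (Fin N), Integrable (fun g => ∑ i ∈ J, |x g i|) μ := fun J =>
    integrable_finsetSum _ fun i _ => integrable_abs_mulVec_stdGaussian V i
  set f : EuclideanSpace ℝ ι → ℝ := fun g => ∑ i ∈ Iᶜ, |x g i| - ∑ i ∈ I, |x g i|
  have hf_nonneg : ∀ g, 0 ≤ f g := fun g => by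
    rcases eq_or_ne (x g) 0 with h | h
    · simp [f, h]
    · exact sub_nonneg.2 (hA _ (hker g) h I hI).le
  have hf_integral : ∫ g, f g ∂μ =
      (∑ i ∈ Iᶜ, ‖WithLp.toLp 2 (V i)‖ - ∑ i ∈ I, ‖WithLp.toLp 2 (V i)‖) *
        ∫ x, |x| ∂gaussianReal 0 1 := by
    rw [integral_sub (hint _) (hint _),
      integral_finsetSum _ fun i _ => integrable_abs_mulVec_stdGaussian V i,
      integral_finsetSum _ fun i _ => integrable_abs_mulVec_stdGaussian V i]
    simp only [integral_abs_mulVec_stdGaussian, ← Finset.sum_mul, sub_mul]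
  by_contra hle
  have hf_zero : f =ᵐ[μ] 0 := by
    refine (integral_eq_zero_iff_of_nonneg hf_nonneg ((hint _).sub (hint _))).1
      (le_antisymm ?_ (integral_nonneg hf_nonneg))
    rw [hf_integral]
    exact mul_nonpos_of_nonpos_of_nonneg (by linarith) integral_abs_gaussianReal_pos.le
  refine hV (eq_zero_of_ae_mulVec_stdGaussian_eq_zero V (hf_zero.mono fun g hg => ?_))
  by_contra h
  have hlt := hA _ (hker g) h I hI
  simp only [f, Pi.zero_apply] at hg
  linarith

lemma sum_norm_lt_sum_norm_of_sum_norm_sub_lt {ι E : Type*} [Fintype ι] [DecidableEq ι]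
    [SeminormedAddCommGroup E] {f g : ι → E} {S : Finset ι} (hf : ∀ i ∉ S, f i = 0)
    (h : ∑ i ∈ S, ‖g i - f i‖ < ∑ i ∈ Sᶜ, ‖g i - f i‖) :
    ∑ i, ‖f i‖ < ∑ i, ‖g i‖ := by
  have hoff : ∀ i ∈ Sᶜ, ‖g i - f i‖ = ‖g i‖ := fun i hi => by
    rw [hf i (Finset.mem_compl.1 hi), sub_zero]
  calc ∑ i, ‖f i‖ = ∑ i ∈ S, ‖f i‖ :=
        (Finset.sum_subset (Finset.subset_univ S) fun i _ hi => by simp [hf i hi]).symm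
    _ ≤ ∑ i ∈ S, (‖g i‖ + ‖g i - f i‖) :=
        Finset.sum_le_sum fun i _ => norm_le_norm_add_norm_sub' (f i) (g i) |>.trans_eq
          (by rw [norm_sub_rev])
    _ < ∑ i ∈ S, ‖g i‖ + ∑ i ∈ Sᶜ, ‖g i - f i‖ := by rw [Finset.sum_add_distrib]; linarith
    _ = ∑ i, ‖g i‖ := by rw [Finset.sum_congr rfl hoff, Finset.sum_add_sum_compl]

/-- If `A` satisfies the NSP of order `s`, then every `s`-row sparse `X` is the unique
minimizer of `‖Z‖_{2,1}` subject to `A * Z = A * X`. -/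
theorem statement_7 {M N K : ℕ} (A : Matrix (Fin M) (Fin N) ℝ) (s : ℕ) (hA : NSP A s)
    (X : Matrix (Fin N) (Fin K) ℝ) (hX : RowSparse s X)
    (Z : Matrix (Fin N) (Fin K) ℝ) (hZ : A * Z = A * X) (hne : Z ≠ X) :
    l21norm X < l21norm Z := by
  classical
  set S := (rowSupport X).toFinset
  have hS : S.card ≤ s := by rw [← Set.ncard_eq_toFinset_card']; exact hX
  have hAV : A * (Z - X) = 0 := by rw [Matrix.mul_sub, hZ, sub_self]
  have hrows := hA.sum_norm_row_lt hAV (sub_ne_zero.2 hne) hS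
  rw [l21norm_eq_sum_norm_row, l21norm_eq_sum_norm_row]
  refine sum_norm_lt_sum_norm_of_sum_norm_sub_lt (S := S) (fun i hi => ?_) ?_
  · by_contra h
    exact hi (Set.mem_toFinset.2 fun hXi => h (by simp [hXi]))
  · simp only [← WithLp.toLp_sub]
    exact hrows
end
end

section
/- Let A ∈ ℝ^{M×N} and K ≥ 1. Suppose that every s-row sparse matrix X ∈ ℝ^{N×K} is the unique minimizer of ‖Z‖_{2,1} over all Z ∈ ℝ^{N×K} satisfying AZ = AX. Then A satisfies the null space property (NSP) of order s. -/
open Matrix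

noncomputable section

/-- If every `s`-row sparse `X ∈ ℝ^{N×K}` (`K ≥ 1`) is the unique minimizer of
`‖Z‖_{2,1}` subject to `A * Z = A * X`, then `A` satisfies the NSP of order `s`. -/
theorem statement_8 {M N K : ℕ} (hK : 1 ≤ K) (A : Matrix (Fin M) (Fin N) ℝ) (s : ℕ)
    (h : ∀ X : Matrix (Fin N) (Fin K) ℝ, RowSparse s X →
      ∀ Z : Matrix (Fin N) (Fin K) ℝ, A * Z = A * X → Z ≠ X → l21norm X < l21norm Z) :
    NSP A s := by
  intro x hx hx0 I hI
  classical
  set j0 : Fin K := ⟨0, hK⟩ with hj0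
  set X : Matrix (Fin N) (Fin K) ℝ :=
    Matrix.of (fun i j => if i ∈ I ∧ j = j0 then x i else 0) with hX
  set Z : Matrix (Fin N) (Fin K) ℝ :=
    Matrix.of (fun i j => if i ∉ I ∧ j = j0 then -x i else 0) with hZ
  have hXa : ∀ i j, X i j = if i ∈ I ∧ j = j0 then x i else 0 := fun i j => rfl
  have hZa : ∀ i j, Z i j = if i ∉ I ∧ j = j0 then -x i else 0 := fun i j => rfl
  have hsparse : RowSparse s X := by
    refine le_trans (le_trans (Set.ncard_le_ncard (t := (I : Set (Fin N))) ?_ (Set.toFinite _)) ?_) hI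
    · intro i hi
      simp only [rowSupport, Set.mem_setOf_eq] at hi
      by_contra hiI
      rw [Finset.mem_coe] at hiI
      apply hi; funext j; simp [hXa, hiI]
    · rw [Set.ncard_coe_finset]
  have hAZ : A * Z = A * X := by
    ext i j
    simp only [Matrix.mul_apply]
    by_cases hj : j = j0
    · subst hj
      have e : ∀ k, A i k * X k j0 - A i k * Z k j0 = A i k * x k := by
        intro k
        by_cases hk : k ∈ I <;> simp [hXa, hZa, hk]
      have e2 : ∑ k, A i k * X k j0 - ∑ k, A i k * Z k j0 = 0 := by
        rw [← Finset.sum_sub_distrib, Finset.sum_congr rfl (fun k _ => e k)]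
        have := congrFun hx i
        simpa [Matrix.mulVec, dotProduct] using this
      linarith
    · simp [hXa, hZa, hj]
  have hne : Z ≠ X := by
    obtain ⟨i, hi⟩ : ∃ i, x i ≠ 0 := by
      by_contra hc
      push_neg at hc
      exact hx0 (funext hc)
    intro hZX
    have := congrFun (congrFun hZX i) j0
    by_cases hk : i ∈ I <;> simp [hXa, hZa, hk] at this <;> first | exact hi this | exact hi this.symm
  have key := h X hsparse Z hAZ hne
  have hlX : l21norm X = ∑ i ∈ I, |x i| := by
    unfold l21norm
    rw [← Finset.sum_add_sum_compl I]
    have h1 : ∀ i ∈ I, Real.sqrt (∑ j, X i j ^ 2) = |x i| := by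
      intro i hi
      have e : ∑ j, X i j ^ 2 = x i ^ 2 := by
        rw [Finset.sum_eq_single j0]
        · simp [hXa, hi]
        · intro b _ hb; simp [hXa, hb]
        · simp
      rw [e, Real.sqrt_sq_eq_abs]
    have h2 : ∀ i ∈ Iᶜ, Real.sqrt (∑ j, X i j ^ 2) = 0 := by
      intro i hi
      rw [Finset.mem_compl] at hi
      simp [hXa, hi]
    rw [Finset.sum_congr rfl h1, Finset.sum_congr rfl h2]
    simp
  have hlZ : l21norm Z = ∑ i ∈ Iᶜ, |x i| := by
    unfold l21norm
    rw [← Finset.sum_add_sum_compl I]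
    have h1 : ∀ i ∈ I, Real.sqrt (∑ j, Z i j ^ 2) = 0 := by
      intro i hi
      simp [hZa, hi]
    have h2 : ∀ i ∈ Iᶜ, Real.sqrt (∑ j, Z i j ^ 2) = |x i| := by
      intro i hi
      rw [Finset.mem_compl] at hi
      have e : ∑ j, Z i j ^ 2 = x i ^ 2 := by
        rw [Finset.sum_eq_single j0]
        · simp [hZa, hi]
        · intro b _ hb; simp [hZa, hb]
        · simp
      rw [e, Real.sqrt_sq_eq_abs]
    rw [Finset.sum_congr rfl h1, Finset.sum_congr rfl h2]
    simp
  rw [hlX, hlZ] at key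
  exact key
end
end

section
/- Let A ∈ ℝ^{M×N}, K ≥ 1, and let φ : ℝ^{N×K} → ℝ be continuous. Let 1 ≤ r' ≤ r ≤ min(s, K) with s ≤ N. Suppose φ(X + W) > φ(X) for every X ∈ Σ_{s,r} and every W ∈ ℝ^{N×K} with W ≠ 0 and AW = 0. Then for every X₀ ∈ Σ_{s,r'} and every W₀ ∈ ℝ^{N×K} with AW₀ = 0, one has φ(X₀ + W₀) ≥ φ(X₀). -/
open Matrix

noncomputable section

/-! Every `s`-row sparse `X` is a limit of matrices in `Σ_{s,r}`: choose `r` rows, inside an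
`s`-set of rows containing the support of `X`, and `r` columns, and add `t` times the identity
on that `r × r` block. The corresponding minor of `X + t • E` is `det (t • 1 + B)`, which vanishes
for only finitely many `t`, so `X + t • E ∈ Σ_{s,r}` for all small `t ≠ 0`. The strict inequality
`φ X < φ (X + W)` on `Σ_{s,r}` thus passes to its closure as `φ X ≤ φ (X + W)`, by continuity. -/

open Filter Topology Function

namespace Matrix

variable {R m n o : Type*}

def partialIdentity [Fintype o] [DecidableEq m] [DecidableEq n] [AddCommMonoid R] [One R]
    (ι : o → m) (c : o → n) : Matrix m n R :=
  ∑ j, single (ι j) (c j) 1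

section PartialIdentity

variable [Fintype o] [DecidableEq m] [DecidableEq n]

theorem partialIdentity_apply [AddCommMonoid R] [One R] (ι : o → m) (c : o → n) (i : m) (k : n) :
    (partialIdentity ι c : Matrix m n R) i k = ∑ j, if ι j = i ∧ c j = k then 1 else 0 := by
  simp [partialIdentity, sum_apply, single_apply]

theorem partialIdentity_submatrix [DecidableEq o] [AddCommMonoidWithOne R] {ι : o → m}
    {c : o → n} (hι : Injective ι) (hc : Injective c) :
    (partialIdentity ι c : Matrix m n R).submatrix ι c = 1 := by
  ext a b
  rw [submatrix_apply, partialIdentity_apply, Finset.sum_eq_single a]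
  · simp [hc.eq_iff, one_apply]
  · intro j _ hj
    simp [hι.eq_iff, hj]
  · simp

theorem partialIdentity_row_eq_zero [AddCommMonoid R] [One R] (ι : o → m) (c : o → n) {i : m}
    (hi : i ∉ Set.range ι) : (partialIdentity ι c : Matrix m n R) i = 0 := by
  ext k
  rw [partialIdentity_apply]
  exact Finset.sum_eq_zero fun j _ => if_neg fun h => hi ⟨j, h.1⟩

end PartialIdentity

theorem card_le_rank_of_isUnit_submatrix_s10 [CommRing R] [StrongRankCondition R] [Fintype n]
    [Fintype o] [DecidableEq o] (A : Matrix m n R) (r : o → m) (c : o → n)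
    (h : IsUnit (A.submatrix r c)) : Fintype.card o ≤ A.rank :=
  (rank_of_isUnit _ h).symm.trans_le (rank_submatrix_le A r c)

theorem eventually_isUnit_smul_one_add {K : Type*} [Field K] [TopologicalSpace K] [T1Space K]
    [Fintype n] [DecidableEq n] (B : Matrix n n K) (a : K) :
    ∀ᶠ t in 𝓝[≠] a, IsUnit (t • 1 + B) := by
  filter_upwards [nhdsNE_le_cofinite a (finite_spectrum (-B)).compl_mem_cofinite] with t ht
  simpa [spectrum.notMem_iff, Algebra.algebraMap_eq_smul_one] using ht

end Matrix

section RowSupport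

variable {N K : ℕ}

theorem rowSupport_add_smul_subset (X Y : Matrix (Fin N) (Fin K) ℝ) (t : ℝ) :
    rowSupport (X + t • Y) ⊆ rowSupport X ∪ rowSupport Y := by
  intro i hi
  by_contra h
  simp only [Set.mem_union, rowSupport, Set.mem_ofPred_eq, not_or, not_not] at h hi
  exact hi (funext fun k => by simp [congrFun h.1 k, congrFun h.2 k])

theorem rowSupport_partialIdentity_subset {o : Type*} [Fintype o] (ι : o → Fin N)
    (c : o → Fin K) :
    rowSupport (partialIdentity ι c : Matrix (Fin N) (Fin K) ℝ) ⊆ Set.range ι :=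
  fun _ hi => by_contra fun h => hi (partialIdentity_row_eq_zero ι c h)

theorem RowSparse.of_rowSupport_subset {s : ℕ} {X : Matrix (Fin N) (Fin K) ℝ}
    {S : Finset (Fin N)} (hXS : rowSupport X ⊆ S) (hS : S.card ≤ s) : RowSparse s X :=
  (Set.ncard_le_ncard hXS S.finite_toSet).trans ((Set.ncard_coe_finset S).trans_le hS)

theorem RowSparse.exists_finset_superset {s : ℕ} {X : Matrix (Fin N) (Fin K) ℝ}
    (hX : RowSparse s X) (hsN : s ≤ N) :
    ∃ S : Finset (Fin N), rowSupport X ⊆ S ∧ S.card = s := by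
  classical
  obtain ⟨S, hXS, hS⟩ := Finset.exists_superset_card_eq (n := s)
    (s := (rowSupport X).toFinset) (by rwa [← Set.ncard_eq_toFinset_card']) (by simpa using hsN)
  exact ⟨S, by simpa using hXS, hS⟩

theorem RowSparse.mem_closure_sigmaSR {s r : ℕ} {X : Matrix (Fin N) (Fin K) ℝ}
    (hX : RowSparse s X) (hrs : r ≤ s) (hrK : r ≤ K) (hsN : s ≤ N) :
    X ∈ closure (SigmaSR s r) := by
  obtain ⟨S, hXS, hS⟩ := hX.exists_finset_superset hsN
  set ι : Fin r → Fin N := fun j => S.equivFin.symm (Fin.castLE (hS ▸ hrs) j)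
  have hι : Injective ι :=
    Subtype.val_injective.comp (S.equivFin.symm.injective.comp (Fin.castLE_injective _))
  set c : Fin r → Fin K := Fin.castLE hrK
  set E : Matrix (Fin N) (Fin K) ℝ := partialIdentity ι c
  have hsparse (t : ℝ) : RowSparse s (X + t • E) := by
    refine .of_rowSupport_subset (fun i hi => ?_) hS.le
    rcases rowSupport_add_smul_subset X E t hi with hi | hi
    · exact hXS hi
    · obtain ⟨j, rfl⟩ := rowSupport_partialIdentity_subset ι c hi
      exact (S.equivFin.symm _).2
  have hrank (t : ℝ) (ht : IsUnit (t • 1 + X.submatrix ι c)) : r ≤ (X + t • E).rank := by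
    have hminor : (X + t • E).submatrix ι c = t • 1 + X.submatrix ι c := by
      change X.submatrix ι c + t • E.submatrix ι c = _
      rw [partialIdentity_submatrix hι (Fin.castLE_injective hrK), add_comm]
    simpa using card_le_rank_of_isUnit_submatrix_s10 (X + t • E) ι c (hminor ▸ ht)
  have hlim : Tendsto (fun t : ℝ => X + t • E) (𝓝[≠] 0) (𝓝 X) :=
    ((continuous_const.add (continuous_id.smul continuous_const)).tendsto' 0 X
      (by simp)).mono_left nhdsWithin_le_nhds
  exact mem_closure_of_tendsto hlim
    ((eventually_isUnit_smul_one_add _ 0).mono fun t ht => ⟨hsparse t, hrank t ht⟩)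

end RowSupport

theorem statement_10_general {M N K : ℕ} (A : Matrix (Fin M) (Fin N) ℝ) (s r r' : ℕ)
    (φ : Matrix (Fin N) (Fin K) ℝ → ℝ) (hφ : Continuous φ)
    (hrs : r ≤ s) (hrK : r ≤ K) (hsN : s ≤ N)
    (h : ∀ X ∈ SigmaSR (N := N) (K := K) s r, ∀ W : Matrix (Fin N) (Fin K) ℝ,
      W ≠ 0 → A * W = 0 → φ X < φ (X + W)) :
    ∀ X₀ ∈ SigmaSR (N := N) (K := K) s r', ∀ W₀ : Matrix (Fin N) (Fin K) ℝ,
      A * W₀ = 0 → φ X₀ ≤ φ (X₀ + W₀) := by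
  rintro X₀ ⟨hX₀, -⟩ W₀ hAW₀
  rcases eq_or_ne W₀ 0 with rfl | hW₀
  · simp
  have hclosed : IsClosed {X | φ X ≤ φ (X + W₀)} :=
    isClosed_le hφ (hφ.comp (continuous_add_const W₀))
  exact closure_minimal (fun X hX => (h X hX W₀ hW₀ hAW₀).le) hclosed
    (hX₀.mem_closure_sigmaSR hrs hrK hsN)

/-- If a continuous functional `φ` satisfies `φ (X + W) > φ X` for all `X ∈ Σ_{s,r}` and
all nonzero `W` with `A * W = 0`, then `φ (X₀ + W₀) ≥ φ X₀` for all `X₀ ∈ Σ_{s,r'}`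
(`r' ≤ r`) and all `W₀` with `A * W₀ = 0`. -/
theorem statement_10 {M N K : ℕ} (A : Matrix (Fin M) (Fin N) ℝ) (s r r' : ℕ)
    (φ : Matrix (Fin N) (Fin K) ℝ → ℝ) (hφ : Continuous φ)
    (hr'1 : 1 ≤ r') (hr'r : r' ≤ r) (hrs : r ≤ s) (hrK : r ≤ K) (hsN : s ≤ N)
    (h : ∀ X ∈ SigmaSR (N := N) (K := K) s r, ∀ W : Matrix (Fin N) (Fin K) ℝ,
      W ≠ 0 → A * W = 0 → φ X < φ (X + W)) :
    ∀ X₀ ∈ SigmaSR (N := N) (K := K) s r', ∀ W₀ : Matrix (Fin N) (Fin K) ℝ,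
      A * W₀ = 0 → φ X₀ ≤ φ (X₀ + W₀) :=
  statement_10_general A s r r' φ hφ hrs hrK hsN h
end
end

section
/- Let δ > 0 and let Z ∈ ℝ^{N×r} have rank r, with compact singular value decomposition Z = UΛV, where U ∈ ℝ^{N×r} satisfies UᵀU = I_r, Λ ∈ ℝ^{r×r} is diagonal with strictly positive diagonal entries, and V ∈ ℝ^{r×r} is orthogonal. Define F_δ on full-rank matrices in ℝ^{N×r} by F_δ(Z) = Σ_{n=1}^N [H_δ(‖(Z(ZᵀZ)^{-1/2})[n]‖₂) + δ/2], where (Z(ZᵀZ)^{-1/2})[n] is the n-th row of the orthogonal factor. Then F_δ is Fréchet differentiable at Z and its Euclidean gradient is ∇F_δ(Z) = (I_N − UUᵀ) D_δ(UV) U Λ⁻¹ V; that is, the Fréchet derivative of F_δ at Z in direction E ∈ ℝ^{N×r} equals trace(((I_N − UUᵀ) D_δ(UV) U Λ⁻¹ V) Eᵀ). -/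
/-!
The squared row norms of the orthogonal factor `Q = Z (ZᵀZ)^{-1/2}` are the diagonal entries of
`Q Qᵀ = P := Z (ZᵀZ)⁻¹ Zᵀ`, so `F_δ(Z) = ∑ᵢ ψ(Pᵢᵢ)` with `ψ(t) = H_δ(√t) + δ/2`, which is
`C¹` in `t` once continued affinely to `t < 0` (the kink of `√` at `0` is where `H_δ` is
quadratic). With `K = Z (ZᵀZ)⁻¹`, the derivative of `P` in direction `E` is `Mᵀ + M` for
`M = K Eᵀ (1 - P)`, so by the chain rule the derivative of `F_δ` is
`tr (diag ψ'(Pᵢᵢ) (Mᵀ + M)) = 2 tr (diag ψ'(Pᵢᵢ) K Eᵀ (1 - P))`. For `Z = U Λ V` one has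
`P = U Uᵀ` and `K = U Λ⁻¹ V`, and `H'_δ(ρ)/ρ = 2 ψ'(ρ²)` turns `2 diag ψ'(Pᵢᵢ) U` into
`D_δ(UV) U`; cycling the trace gives the stated gradient.
-/

open Matrix

noncomputable section

attribute [local instance] Matrix.normedAddCommGroup Matrix.normedSpace

/-- The Euclidean norm of the `i`-th row of a matrix. -/
def rowNorm {N r : ℕ} (X : Matrix (Fin N) (Fin r) ℝ) (i : Fin N) : ℝ :=
  Real.sqrt (∑ j, (X i j) ^ 2)

/-- The Huber function `H_δ`. -/
def huber (δ x : ℝ) : ℝ := if δ ≤ x then x - δ / 2 else x ^ 2 / (2 * δ)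

/-- The derivative `H'_δ` of the Huber function. -/
def huberDeriv (δ x : ℝ) : ℝ := if δ ≤ x then 1 else x / δ

open Classical in
/-- The diagonal matrix `D_δ(M)` with entries `H'_δ(‖M[i,:]‖₂)/‖M[i,:]‖₂` on nonzero
rows and `0` on zero rows. -/
def Ddelta (δ : ℝ) {N r : ℕ} (M : Matrix (Fin N) (Fin r) ℝ) : Matrix (Fin N) (Fin N) ℝ :=
  Matrix.diagonal fun i => if M i = 0 then 0 else huberDeriv δ (rowNorm M i) / rowNorm M i

open scoped ComplexOrder in
/-- The square root of a positive semidefinite matrix, as defined in the older Mathlib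
(`Matrix.PosSemidef.sqrt`, since removed). -/
def Matrix.PosSemidef.sqrt {n 𝕜 : Type*} [Fintype n] [RCLike 𝕜] [DecidableEq n]
    {A : Matrix n n 𝕜} (hA : A.PosSemidef) : Matrix n n 𝕜 :=
  hA.1.eigenvectorUnitary.1 * diagonal ((↑) ∘ (√·) ∘ hA.1.eigenvalues) *
    (star hA.1.eigenvectorUnitary : Matrix n n 𝕜)

/-- The orthogonal factor `Z (ZᵀZ)^{-1/2}` of `Z`, where `(ZᵀZ)^{-1/2}` is the inverse of
the (unique) symmetric positive-semidefinite square root of `ZᵀZ`; for `Z` of full column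
rank this square root is the unique symmetric positive-definite one. -/
def orthFactor {N r : ℕ} (Z : Matrix (Fin N) (Fin r) ℝ) : Matrix (Fin N) (Fin r) ℝ :=
  Z * (Matrix.PosSemidef.sqrt (Matrix.posSemidef_conjTranspose_mul_self Z))⁻¹

/-- The Huber-regularized functional
`F_δ(Z) = Σ_n [H_δ(‖(Z(ZᵀZ)^{-1/2})[n]‖₂) + δ/2]`. -/
def Fdelta (δ : ℝ) {N r : ℕ} (Z : Matrix (Fin N) (Fin r) ℝ) : ℝ :=
  ∑ n, (huber δ (rowNorm (orthFactor Z) n) + δ / 2)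


open Topology Set

/-- `H_δ(√t) + δ/2` for `t ≥ 0` (`huber_sqrt_add_half`), continued affinely to `t < 0`, which
makes it differentiable on all of `ℝ`. -/
def huberSqrt (δ t : ℝ) : ℝ := if δ ^ 2 ≤ t then √t else t / (2 * δ) + δ / 2

def huberSqrtDeriv (δ t : ℝ) : ℝ := if δ ^ 2 ≤ t then 1 / (2 * √t) else 1 / (2 * δ)

def colSpaceProj {m n : Type*} [Fintype m] [Fintype n] [DecidableEq n] (Z : Matrix m n ℝ) :
    Matrix m m ℝ :=
  Z * (Zᵀ * Z)⁻¹ * Zᵀ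

theorem huber_sqrt_add_half {δ t : ℝ} (hδ : 0 ≤ δ) (ht : 0 ≤ t) :
    huber δ √t + δ / 2 = huberSqrt δ t := by
  unfold huber huberSqrt
  simp only [Real.le_sqrt hδ ht]
  split_ifs
  · ring
  · rw [Real.sq_sqrt ht]

theorem hasDerivAt_huberSqrt {δ : ℝ} (hδ : 0 < δ) (t : ℝ) :
    HasDerivAt (huberSqrt δ) (huberSqrtDeriv δ t) t := by
  have hline (s : ℝ) : HasDerivAt (fun s => s / (2 * δ) + δ / 2) (1 / (2 * δ)) s := by
    simpa using ((hasDerivAt_id s).div_const (2 * δ)).add_const (δ / 2)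
  rcases lt_trichotomy t (δ ^ 2) with ht | rfl | ht
  · have hloc : huberSqrt δ =ᶠ[𝓝 t] fun s => s / (2 * δ) + δ / 2 := by
      filter_upwards [eventually_lt_nhds ht] with s hs
      simp [huberSqrt, hs.not_ge]
    rw [huberSqrtDeriv, if_neg ht.not_ge]
    exact (hline t).congr_of_eventuallyEq hloc
  · rw [huberSqrtDeriv, if_pos le_rfl, Real.sqrt_sq hδ.le]
    have hleft : HasDerivWithinAt (huberSqrt δ) (1 / (2 * δ)) (Iic (δ ^ 2)) (δ ^ 2) := by
      refine (hline _).hasDerivWithinAt.congr_of_mem (fun s hs => ?_) (mem_Iic.2 le_rfl)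
      rcases (mem_Iic.1 hs).lt_or_eq with hs | rfl
      · simp [huberSqrt, hs.not_ge]
      · rw [huberSqrt, if_pos le_rfl, Real.sqrt_sq hδ.le]
        field_simp
        ring
    have hright : HasDerivWithinAt (huberSqrt δ) (1 / (2 * δ)) (Ici (δ ^ 2)) (δ ^ 2) := by
      have h := Real.hasDerivAt_sqrt (pow_pos hδ 2).ne'
      rw [Real.sqrt_sq hδ.le] at h
      exact h.hasDerivWithinAt.congr_of_mem (fun s hs => if_pos hs) (mem_Ici.2 le_rfl)
    simpa [Iic_union_Ici] using hleft.union hright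
  · have hloc : huberSqrt δ =ᶠ[𝓝 t] Real.sqrt := by
      filter_upwards [eventually_gt_nhds ht] with s hs
      exact if_pos hs.le
    rw [huberSqrtDeriv, if_pos ht.le]
    exact (Real.hasDerivAt_sqrt ((pow_pos hδ 2).trans ht).ne').congr_of_eventuallyEq hloc

namespace Matrix.PosSemidef

open scoped ComplexOrder

variable {n 𝕜 : Type*} [Fintype n] [RCLike 𝕜] [DecidableEq n] {A : Matrix n n 𝕜}

theorem sqrt_eq_cfc (hA : A.PosSemidef) : hA.sqrt = cfc Real.sqrt A := by
  rw [hA.1.cfc_eq, IsHermitian.cfc, Unitary.conjStarAlgAut_apply]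
  rfl

theorem sqrt_mul_sqrt (hA : A.PosSemidef) : hA.sqrt * hA.sqrt = A := by
  have : IsSelfAdjoint A := hA.1
  rw [sqrt_eq_cfc, ← cfc_mul Real.sqrt Real.sqrt A]
  conv_rhs => rw [← cfc_id' ℝ A]
  refine cfc_congr fun x hx => ?_
  rw [hA.1.spectrum_real_eq_range_eigenvalues] at hx
  obtain ⟨i, rfl⟩ := hx
  exact Real.mul_self_sqrt (hA.eigenvalues_nonneg i)

theorem isHermitian_sqrt (hA : A.PosSemidef) : hA.sqrt.IsHermitian := by
  have : IsSelfAdjoint A := hA.1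
  rw [sqrt_eq_cfc]
  exact cfc_predicate Real.sqrt A

end Matrix.PosSemidef

section RowNorm

variable {N r : ℕ}

theorem rowNorm_sq (M : Matrix (Fin N) (Fin r) ℝ) (i : Fin N) :
    rowNorm M i ^ 2 = (M * Mᵀ) i i := by
  rw [rowNorm, Real.sq_sqrt (by positivity)]
  simp [mul_apply, sq]

theorem rowNorm_pos {M : Matrix (Fin N) (Fin r) ℝ} {i : Fin N} (hi : M i ≠ 0) :
    0 < rowNorm M i := by
  obtain ⟨j, hj⟩ := Function.ne_iff.1 hi
  exact Real.sqrt_pos.2 <| Finset.sum_pos' (fun _ _ => sq_nonneg _)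
    ⟨j, Finset.mem_univ _, sq_pos_of_ne_zero hj⟩

theorem orthFactor_mul_transpose (Z : Matrix (Fin N) (Fin r) ℝ) :
    orthFactor Z * (orthFactor Z)ᵀ = colSpaceProj Z := by
  have hZ := posSemidef_conjTranspose_mul_self Z
  have hS : hZ.sqrt * hZ.sqrt = Zᵀ * Z := hZ.sqrt_mul_sqrt
  have hST : hZ.sqrtᵀ = hZ.sqrt := hZ.isHermitian_sqrt
  rw [orthFactor, colSpaceProj, transpose_mul, transpose_nonsing_inv, hST, ← hS,
    Matrix.mul_inv_rev]
  simp only [Matrix.mul_assoc]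

theorem Fdelta_eq_sum_huberSqrt {δ : ℝ} (hδ : 0 ≤ δ) (Z : Matrix (Fin N) (Fin r) ℝ) :
    Fdelta δ Z = ∑ n, huberSqrt δ (colSpaceProj Z n n) := by
  refine Finset.sum_congr rfl fun n _ => ?_
  rw [← orthFactor_mul_transpose, ← rowNorm_sq, ← huber_sqrt_add_half hδ (sq_nonneg _),
    Real.sqrt_sq (show 0 ≤ rowNorm (orthFactor Z) n from Real.sqrt_nonneg _)]

theorem huberDeriv_div_self {δ ρ : ℝ} (hδ : 0 ≤ δ) (hρ : 0 < ρ) :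
    huberDeriv δ ρ / ρ = 2 * huberSqrtDeriv δ (ρ ^ 2) := by
  simp only [huberDeriv, huberSqrtDeriv, Real.sqrt_sq hρ.le,
    pow_le_pow_iff_left₀ hδ hρ.le two_ne_zero]
  split_ifs <;> field_simp

theorem Ddelta_mul_self {δ : ℝ} (hδ : 0 ≤ δ) (M : Matrix (Fin N) (Fin r) ℝ) :
    Ddelta δ M * M = (2 : ℝ) • diagonal (fun i => huberSqrtDeriv δ ((M * Mᵀ) i i)) * M := by
  ext i j
  rw [Ddelta, diagonal_mul, Matrix.smul_mul, Matrix.smul_apply, diagonal_mul, smul_eq_mul]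
  by_cases hi : M i = 0
  · simp [show M i j = 0 from congrFun hi j]
  · rw [if_neg hi, huberDeriv_div_self hδ (rowNorm_pos hi), rowNorm_sq]
    ring

theorem Ddelta_mul_of_mul_transpose_eq_one {δ : ℝ} (hδ : 0 ≤ δ) (U : Matrix (Fin N) (Fin r) ℝ)
    {V : Matrix (Fin r) (Fin r) ℝ} (hV : V * Vᵀ = 1) :
    Ddelta δ (U * V) * U = (2 : ℝ) • diagonal (fun i => huberSqrtDeriv δ ((U * Uᵀ) i i)) * U := by
  have hUV : U * V * (U * V)ᵀ = U * Uᵀ := by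
    rw [transpose_mul, Matrix.mul_assoc, ← Matrix.mul_assoc V, hV, Matrix.one_mul]
  calc Ddelta δ (U * V) * U = Ddelta δ (U * V) * (U * V) * Vᵀ := by
        rw [Matrix.mul_assoc _ (U * V), Matrix.mul_assoc U, hV, Matrix.mul_one]
    _ = _ := by
        rw [Ddelta_mul_self hδ, hUV, Matrix.mul_assoc _ (U * V), Matrix.mul_assoc U, hV,
          Matrix.mul_one]

end RowNorm

section ThinSVD

variable {m n : Type*} [Fintype m] [Fintype n] [DecidableEq n]
  {U : Matrix m n ℝ} {Λ V : Matrix n n ℝ}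

theorem transpose_mul_self_of_svd (hU : Uᵀ * U = 1) (hΛ : Λᵀ = Λ) :
    (U * Λ * V)ᵀ * (U * Λ * V) = Vᵀ * (Λ * Λ) * V := by
  rw [transpose_mul, transpose_mul, hΛ]
  simp only [Matrix.mul_assoc]
  rw [← Matrix.mul_assoc Uᵀ U, hU, Matrix.one_mul]

theorem isUnit_det_transpose_mul_self_of_svd (hU : Uᵀ * U = 1) (hΛ : Λᵀ = Λ)
    (hΛu : IsUnit Λ.det) (hV : Vᵀ * V = 1) :
    IsUnit ((U * Λ * V)ᵀ * (U * Λ * V)).det := by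
  have hVu : IsUnit V.det := isUnit_det_of_left_inverse hV
  rw [transpose_mul_self_of_svd hU hΛ, det_mul, det_mul, det_mul, det_transpose]
  exact (hVu.mul (hΛu.mul hΛu)).mul hVu

theorem mul_inv_transpose_mul_self_of_svd (hU : Uᵀ * U = 1) (hΛ : Λᵀ = Λ)
    (hΛu : IsUnit Λ.det) (hV : Vᵀ * V = 1) :
    U * Λ * V * ((U * Λ * V)ᵀ * (U * Λ * V))⁻¹ = U * Λ⁻¹ * V := by
  have hVV : V * Vᵀ = 1 := mul_eq_one_comm.1 hV
  rw [transpose_mul_self_of_svd hU hΛ, Matrix.mul_inv_rev, Matrix.mul_inv_rev,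
    inv_eq_left_inv hV, inv_eq_left_inv hVV, Matrix.mul_inv_rev]
  simp only [Matrix.mul_assoc]
  rw [← Matrix.mul_assoc V Vᵀ, hVV, Matrix.one_mul, ← Matrix.mul_assoc Λ Λ⁻¹,
    mul_nonsing_inv Λ hΛu, Matrix.one_mul]

theorem colSpaceProj_of_svd (hU : Uᵀ * U = 1) (hΛ : Λᵀ = Λ) (hΛu : IsUnit Λ.det)
    (hV : Vᵀ * V = 1) : colSpaceProj (U * Λ * V) = U * Uᵀ := by
  rw [colSpaceProj, mul_inv_transpose_mul_self_of_svd hU hΛ hΛu hV, transpose_mul,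
    transpose_mul, hΛ]
  simp only [Matrix.mul_assoc]
  rw [← Matrix.mul_assoc V Vᵀ, mul_eq_one_comm.1 hV, Matrix.one_mul, ← Matrix.mul_assoc Λ⁻¹ Λ,
    nonsing_inv_mul Λ hΛu, Matrix.one_mul]

end ThinSVD

theorem trace_diagonal_mul_transpose_add_self {m : Type*} [Fintype m] [DecidableEq m]
    (d : m → ℝ) (M : Matrix m m ℝ) :
    (diagonal d * (Mᵀ + M)).trace = 2 * (diagonal d * M).trace := by
  have h : (diagonal d * Mᵀ).trace = (diagonal d * M).trace := by
    rw [← trace_transpose, transpose_mul, transpose_transpose, diagonal_transpose,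
      trace_mul_comm]
  rw [Matrix.mul_add, trace_add, h, two_mul]

section Calculus

variable {X : Type*} [NormedAddCommGroup X] [NormedSpace ℝ X] {l m n : Type*}
  [Fintype l] [Fintype m] [Fintype n] {x : X}

theorem HasFDerivAt.matrix_mul {f : X → Matrix l m ℝ} {g : X → Matrix m n ℝ}
    {f' : X →L[ℝ] Matrix l m ℝ} {g' : X →L[ℝ] Matrix m n ℝ}
    (hf : HasFDerivAt f f' x) (hg : HasFDerivAt g g' x) :
    ∃ L : X →L[ℝ] Matrix l n ℝ, (∀ v, L v = f x * g' v + f' v * g x) ∧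
      HasFDerivAt (fun y => f y * g y) L x := by
  let B : Matrix l m ℝ →L[ℝ] Matrix m n ℝ →L[ℝ] Matrix l n ℝ :=
    LinearMap.toContinuousLinearMap
      (LinearMap.toContinuousLinearMap.toLinearMap ∘ₗ mulLinearMap ℝ)
  exact ⟨_, fun v => rfl, B.hasFDerivAt_of_bilinear hf hg⟩

theorem HasFDerivAt.matrix_transpose {f : X → Matrix m n ℝ} {f' : X →L[ℝ] Matrix m n ℝ}
    (hf : HasFDerivAt f f' x) :
    ∃ L : X →L[ℝ] Matrix n m ℝ, (∀ v, L v = (f' v)ᵀ) ∧ HasFDerivAt (fun y => (f y)ᵀ) L x :=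
  let T := LinearMap.toContinuousLinearMap (transposeLinearEquiv m n ℝ ℝ).toLinearMap
  ⟨T.comp f', fun _ => rfl, T.hasFDerivAt.comp x hf⟩

theorem HasFDerivAt.matrix_inv [DecidableEq n] {f : X → Matrix n n ℝ}
    {f' : X →L[ℝ] Matrix n n ℝ} (hf : HasFDerivAt f f' x) (hx : IsUnit (f x).det) :
    ∃ L : X →L[ℝ] Matrix n n ℝ, (∀ v, L v = -((f x)⁻¹ * f' v * (f x)⁻¹)) ∧
      HasFDerivAt (fun y => (f y)⁻¹) L x := by
  -- The `L∞`-operator norm makes square matrices a complete normed algebra with the same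
  -- topology, where `Ring.inverse` is differentiable. Completeness is passed by hand, since
  -- instance search would return it for the entrywise sup norm instead.
  let _ : NormedRing (Matrix n n ℝ) := Matrix.linftyOpNormedRing
  let _ : NormedAlgebra ℝ (Matrix n n ℝ) := Matrix.linftyOpNormedAlgebra
  have hc : CompleteSpace (Matrix n n ℝ) :=
    @FiniteDimensional.complete ℝ (Matrix n n ℝ) _ _ _
      (Matrix.linftyOpNormedRing (n := n) (α := ℝ)).toMetricSpace.toUniformSpace _ _ _ _ _
  have : HasSummableGeomSeries (Matrix n n ℝ) :=
    @instHasSummableGeomSeriesOfCompleteSpace _ _ hc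
  have hu := (isUnit_iff_isUnit_det (f x)).2 hx
  have h := hasFDerivAt_ringInverse (𝕜 := ℝ) hu.unit
  rw [coe_units_inv, hu.unit_spec, ← funext nonsing_inv_eq_ringInverse] at h
  exact ⟨_, fun v => rfl, h.comp x hf⟩

theorem HasFDerivAt.colSpaceProj [DecidableEq m] [DecidableEq n] {f : X → Matrix m n ℝ}
    {f' : X →L[ℝ] Matrix m n ℝ} (hf : HasFDerivAt f f' x) (hx : IsUnit ((f x)ᵀ * f x).det) :
    ∃ L : X →L[ℝ] Matrix m m ℝ,
      (∀ v, L v = (f x * ((f x)ᵀ * f x)⁻¹ * (f' v)ᵀ * (1 - colSpaceProj (f x)))ᵀ +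
        f x * ((f x)ᵀ * f x)⁻¹ * (f' v)ᵀ * (1 - colSpaceProj (f x))) ∧
      HasFDerivAt (fun y => colSpaceProj (f y)) L x := by
  obtain ⟨LT, hLT, hT⟩ := hf.matrix_transpose
  obtain ⟨LG, hLG, hG⟩ := hT.matrix_mul hf
  obtain ⟨LI, hLI, hI⟩ := hG.matrix_inv hx
  obtain ⟨LK, hLK, hK⟩ := hf.matrix_mul hI
  obtain ⟨LP, hLP, hP⟩ := hK.matrix_mul hT
  refine ⟨LP, fun v => ?_, hP⟩
  have hsymm : ((f x)ᵀ * f x)⁻¹ᵀ = ((f x)ᵀ * f x)⁻¹ := by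
    rw [transpose_nonsing_inv, transpose_mul, transpose_transpose]
  rw [hLP, hLK, hLI, hLG, hLT]
  simp only [_root_.colSpaceProj, transpose_mul, transpose_sub, transpose_transpose, hsymm,
    Matrix.mul_add, Matrix.add_mul, Matrix.mul_neg, Matrix.neg_mul, Matrix.mul_sub,
    Matrix.mul_one, Matrix.mul_assoc]
  abel

theorem HasFDerivAt.sum_huberSqrt_diag [DecidableEq m] {δ : ℝ} (hδ : 0 < δ)
    {P : X → Matrix m m ℝ} {P' : X →L[ℝ] Matrix m m ℝ} (hP : HasFDerivAt P P' x) :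
    ∃ L : X →L[ℝ] ℝ,
      (∀ v, L v = (diagonal (fun i => huberSqrtDeriv δ (P x i i)) * P' v).trace) ∧
      HasFDerivAt (fun y => ∑ i, huberSqrt δ (P y i i)) L x := by
  have hentry (i : m) : HasFDerivAt (fun y => huberSqrt δ (P y i i))
      (huberSqrtDeriv δ (P x i i) • (entryLinearMap ℝ ℝ i i).toContinuousLinearMap.comp P') x :=
    (hasDerivAt_huberSqrt hδ _).comp_hasFDerivAt x
      ((entryLinearMap ℝ ℝ i i).toContinuousLinearMap.hasFDerivAt.comp x hP)
  refine ⟨_, fun v => ?_, HasFDerivAt.fun_sum fun i _ => hentry i⟩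
  simp [trace, diagonal_mul]

theorem hasFDerivAt_sum_huberSqrt_colSpaceProj [DecidableEq m] [DecidableEq n] {δ : ℝ}
    (hδ : 0 < δ) {Z : Matrix m n ℝ} (hZ : IsUnit (Zᵀ * Z).det) :
    ∃ L : Matrix m n ℝ →L[ℝ] ℝ,
      (∀ E, L E = 2 * (diagonal (fun i => huberSqrtDeriv δ (colSpaceProj Z i i)) *
        (Z * (Zᵀ * Z)⁻¹ * Eᵀ * (1 - colSpaceProj Z))).trace) ∧
      HasFDerivAt (fun Y => ∑ i, huberSqrt δ (colSpaceProj Y i i)) L Z := by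
  obtain ⟨LP, hLP, hP⟩ := (hasFDerivAt_id Z).colSpaceProj hZ
  obtain ⟨L, hL, hF⟩ := hP.sum_huberSqrt_diag hδ
  refine ⟨L, fun E => (hL E).trans ?_, hF⟩
  rw [hLP, trace_diagonal_mul_transpose_add_self]
  -- what is left is `ContinuousLinearMap.id _ _ E` against `E`: equal by unfolding, but the two
  -- sides carry different (defeq) topologies on matrices, so no rewrite lemma applies
  rfl

end Calculus

theorem statement_18_general {N r : ℕ} (δ : ℝ) (hδ : 0 < δ)
    (Z : Matrix (Fin N) (Fin r) ℝ)
    (U : Matrix (Fin N) (Fin r) ℝ) (Λ V : Matrix (Fin r) (Fin r) ℝ)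
    (hU : Uᵀ * U = 1)
    (hΛdiag : ∀ i j, i ≠ j → Λ i j = 0) (hΛpos : ∀ i, 0 < Λ i i)
    (hV : Vᵀ * V = 1) (hSVD : Z = U * Λ * V) :
    ∃ L : Matrix (Fin N) (Fin r) ℝ →L[ℝ] ℝ,
      (∀ E : Matrix (Fin N) (Fin r) ℝ,
        L E = ((1 - U * Uᵀ) * Ddelta δ (U * V) * U * Λ⁻¹ * V * Eᵀ).trace) ∧
      HasFDerivAt (Fdelta δ) L Z := by
  have hΛ : Λ.IsDiag := fun i j => hΛdiag i j
  have hΛu : IsUnit Λ.det := by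
    rw [← hΛ.diagonal_diag, det_diagonal]
    exact (Finset.prod_pos fun i _ => hΛpos i).ne'.isUnit
  subst hSVD
  obtain ⟨L, hL, hF⟩ := hasFDerivAt_sum_huberSqrt_colSpaceProj hδ
    (isUnit_det_transpose_mul_self_of_svd hU hΛ.isSymm hΛu hV)
  refine ⟨L, fun E => ?_, ?_⟩
  · rw [hL, colSpaceProj_of_svd hU hΛ.isSymm hΛu hV,
      mul_inv_transpose_mul_self_of_svd hU hΛ.isSymm hΛu hV,
      show (1 - U * Uᵀ) * Ddelta δ (U * V) * U * Λ⁻¹ * V * Eᵀ =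
        (1 - U * Uᵀ) * (Ddelta δ (U * V) * U) * (Λ⁻¹ * V * Eᵀ) by simp only [Matrix.mul_assoc],
      Ddelta_mul_of_mul_transpose_eq_one hδ.le U (mul_eq_one_comm.1 hV), Matrix.smul_mul,
      Matrix.mul_smul, Matrix.smul_mul, trace_smul, smul_eq_mul]
    simp only [Matrix.mul_assoc]
    rw [trace_mul_comm (1 - U * Uᵀ)]
    simp only [Matrix.mul_assoc]
  · rw [show Fdelta δ = fun Y => ∑ n, huberSqrt δ (colSpaceProj Y n n) from
      funext (Fdelta_eq_sum_huberSqrt hδ.le)]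
    exact hF

/-- `F_δ` is Fréchet differentiable at any full-rank `Z` with compact SVD `Z = U Λ V`,
with Euclidean gradient `(I_N − UUᵀ) D_δ(UV) U Λ⁻¹ V`: the Fréchet derivative in
direction `E` is `trace((I_N − UUᵀ) D_δ(UV) U Λ⁻¹ V Eᵀ)`. -/
theorem statement_18 {N r : ℕ} (δ : ℝ) (hδ : 0 < δ)
    (Z : Matrix (Fin N) (Fin r) ℝ) (hrank : Z.rank = r)
    (U : Matrix (Fin N) (Fin r) ℝ) (Λ V : Matrix (Fin r) (Fin r) ℝ)
    (hU : Uᵀ * U = 1)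
    (hΛdiag : ∀ i j, i ≠ j → Λ i j = 0) (hΛpos : ∀ i, 0 < Λ i i)
    (hV : Vᵀ * V = 1) (hSVD : Z = U * Λ * V) :
    ∃ L : Matrix (Fin N) (Fin r) ℝ →L[ℝ] ℝ,
      (∀ E : Matrix (Fin N) (Fin r) ℝ,
        L E = ((1 - U * Uᵀ) * Ddelta δ (U * V) * U * Λ⁻¹ * V * Eᵀ).trace) ∧
      HasFDerivAt (Fdelta δ) L Z :=
  statement_18_general δ hδ Z U Λ V hU hΛdiag hΛpos hV hSVD
end
end
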